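/- Consider the IFS on X = [0,1] with Λ = {0,1}, ω_0(x) = x/2, and ω_1(x) = min(2x, 1). Let p be the probability on Λ with p({0}) = p({1}) = 1/2 and ℙ = p^ℕ the Bernoulli measure on Ω = {0,1}^ℕ. Then ℙ(G) = 0, where G = {σ ∈ Ω : lim_{n→∞} diam(ω_{σ_n} ∘ ⋯ ∘ ω_{σ_1}([0,1])) = 0}. -/

import Mathlib

open Metric Set Filter MeasureTheory

def fcomp {Λ X : Type*} (ω : Λ → X → X) (σ : ℕ → Λ) : ℕ → X → X
  | 0 => id
  | n + 1 => ω (σ n) ∘ fcomp ω σ n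

def IsBernoulli {Λ : Type*} [MeasurableSpace Λ]
    (p : Measure Λ) (P : Measure (ℕ → Λ)) : Prop :=
  IsProbabilityMeasure P ∧
    ∀ (n : ℕ) (A : ℕ → Set Λ), (∀ i, MeasurableSet (A i)) →
      P {σ | ∀ i < n, σ i ∈ A i} = ∏ i ∈ Finset.range n, p (A i)

/-- `ω_0(x) = x / 2` on `[0,1]`. -/
noncomputable def w0 (x : Set.Icc (0:ℝ) 1) : Set.Icc (0:ℝ) 1 :=
  ⟨(x : ℝ) / 2, ⟨by have := x.2.1; linarith, by have := x.2.2; linarith⟩⟩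

/-- `ω_1(x) = min (2x) 1` on `[0,1]`. -/
noncomputable def w1 (x : Set.Icc (0:ℝ) 1) : Set.Icc (0:ℝ) 1 :=
  ⟨min (2 * (x : ℝ)) 1,
    ⟨le_min (by have := x.2.1; linarith) zero_le_one, min_le_right _ _⟩⟩

/-- The IFS with parameter space `{0, 1}` (encoded by `Bool`). -/
noncomputable def wmap : Bool → Set.Icc (0:ℝ) 1 → Set.Icc (0:ℝ) 1
  | false => w0
  | true => w1

/-- The set `G` where `diam (ω_{σ_n} ∘ ⋯ ∘ ω_{σ_1}([0,1])) → 0`. -/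
def Gset : Set (ℕ → Bool) :=
  {σ | Tendsto (fun n => Metric.diam (Set.range (fcomp wmap σ n))) atTop (nhds 0)}

/-! The image of `[0,1]` under `ω_{σ_n} ∘ ⋯ ∘ ω_{σ_1}` contains `0` and `2^{-M_n}`, where `M` is
the simple random walk driven by `σ` (`ω_0` steps up, `ω_1` steps down) reflected at `0`. If the
diameters tend to `0`, then `M` is eventually positive, so from then on it moves in lockstep with
the unreflected walk `S`, and `S` is bounded below. For the fair walk this has probability zero: by
the Markov property `u a := ℙ(∀ n, a ≤ S_n)` satisfies `u a = (u (a - 1) + u (a + 1)) / 2` for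
`a ≤ 0`, and `u 1 = 0`, so `u` is affine on `a ≤ 1`; being bounded, it vanishes. -/

def shift {X : Type*} (σ : ℕ → X) : ℕ → X := fun n => σ (n + 1)

section Bernoulli

variable {X : Type*} [MeasurableSpace X]

lemma measurable_shift : Measurable (shift : (ℕ → X) → ℕ → X) :=
  measurable_pi_lambda _ fun n => measurable_pi_apply (n + 1)

theorem IsBernoulli.eq_infinitePi {p : Measure X} [IsProbabilityMeasure p] {P : Measure (ℕ → X)}
    (hP : IsBernoulli p P) : P = Measure.infinitePi fun _ => p := by
  refine Measure.eq_infinitePi _ fun s t ht => ?_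
  obtain ⟨n, hn⟩ : ∃ n, ∀ i ∈ s, i < n :=
    ⟨s.sup id + 1, fun i hi => Nat.lt_succ_of_le (Finset.le_sup (f := id) hi)⟩
  have hbox : (s : Set ℕ).pi t = {σ | ∀ i < n, σ i ∈ if i ∈ s then t i else univ} := by
    ext σ
    simp only [Set.mem_pi, Finset.mem_coe, mem_ofPred_eq]
    refine ⟨fun h i _ => ?_, fun h i hi => by simpa only [if_pos hi] using h i (hn i hi)⟩
    split_ifs with hi
    exacts [h i hi, trivial]
  rw [hbox, hP.2 n _ fun i => by split_ifs; exacts [ht i, .univ]]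
  simp only [apply_ite p, measure_univ]
  rw [Finset.prod_ite_mem, Finset.inter_eq_right.2 fun i hi => Finset.mem_range.2 (hn i hi)]

theorem map_shift_restrict_infinitePi (μ : Measure X) [IsProbabilityMeasure μ] {A : Set X}
    (hA : MeasurableSet A) :
    ((Measure.infinitePi fun _ : ℕ => μ).restrict {σ | σ 0 ∈ A}).map shift =
      μ A • Measure.infinitePi fun _ => μ := by
  rcases eq_or_ne (μ A) 0 with h0 | h0
  · have hnull : Measure.infinitePi (fun _ : ℕ => μ) {σ | σ 0 ∈ A} = 0 :=
      ((measurePreserving_eval_infinitePi (fun _ : ℕ => μ) 0).measure_preimage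
        hA.nullMeasurableSet).trans h0
    simp [Measure.restrict_eq_zero.2 hnull, h0]
  suffices h : (μ A)⁻¹ • ((Measure.infinitePi fun _ : ℕ => μ).restrict {σ | σ 0 ∈ A}).map shift =
      Measure.infinitePi fun _ => μ by
    conv_rhs => rw [← h, smul_smul, ENNReal.mul_inv_cancel h0 (measure_ne_top _ _), one_smul]
  refine Measure.eq_infinitePi _ fun s t ht => ?_
  have hbox : shift ⁻¹' (s : Set ℕ).pi t ∩ {σ | σ 0 ∈ A} =
      ((insert 0 (s.map (addRightEmbedding 1)) : Finset ℕ) : Set ℕ).pi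
        fun i => if i = 0 then A else t (i - 1) := by
    ext σ
    simp [shift, and_comm]
  have hbox_meas : MeasurableSet ((s : Set ℕ).pi t) := .pi s.countable_toSet fun i _ => ht i
  rw [Measure.smul_apply, Measure.map_apply measurable_shift hbox_meas,
    Measure.restrict_apply (measurable_shift hbox_meas), hbox,
    Measure.infinitePi_pi _ fun i _ => by split_ifs; exacts [hA, ht _],
    Finset.prod_insert (by simp)]
  simp [← mul_assoc, ENNReal.inv_mul_cancel h0 (measure_ne_top _ _)]

theorem infinitePi_inter_shift_preimage (μ : Measure X) [IsProbabilityMeasure μ] {A : Set X}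
    (hA : MeasurableSet A) {E : Set (ℕ → X)} (hE : MeasurableSet E) :
    Measure.infinitePi (fun _ => μ) ({σ | σ 0 ∈ A} ∩ shift ⁻¹' E) =
      μ A * Measure.infinitePi (fun _ => μ) E := by
  rw [inter_comm, ← Measure.restrict_apply (measurable_shift hE),
    ← Measure.map_apply measurable_shift hE, map_shift_restrict_infinitePi μ hA,
    Measure.smul_apply, smul_eq_mul]

end Bernoulli

section Walk

def walkStep (b : Bool) : ℤ := if b then -1 else 1

def walk (σ : ℕ → Bool) (n : ℕ) : ℤ := ∑ i ∈ Finset.range n, walkStep (σ i)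

def staysAbove (a : ℤ) : Set (ℕ → Bool) := {σ | ∀ n, a ≤ walk σ n}

variable (σ : ℕ → Bool) (n : ℕ)

lemma walk_zero : walk σ 0 = 0 := rfl

lemma walk_succ : walk σ (n + 1) = walk σ n + walkStep (σ n) := Finset.sum_range_succ _ n

lemma walk_succ' : walk σ (n + 1) = walkStep (σ 0) + walk (shift σ) n := by
  rw [walk, Finset.sum_range_succ', add_comm]; rfl

lemma neg_le_walk : -(n : ℤ) ≤ walk σ n := by
  induction n with
  | zero => simp [walk_zero]
  | succ n ih =>
    have : -1 ≤ walkStep (σ n) := by unfold walkStep; split_ifs <;> norm_num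
    rw [walk_succ]; push_cast; linarith

lemma measurable_walk : Measurable fun σ => walk σ n :=
  Finset.measurable_sum _ fun i _ => (measurable_of_countable walkStep).comp (measurable_pi_apply i)

lemma measurableSet_staysAbove (a : ℤ) : MeasurableSet (staysAbove a) := by
  simp only [staysAbove, ofPred_forall]
  exact .iInter fun n => measurable_walk n measurableSet_Ici

variable {σ}

lemma mem_staysAbove_iff {a : ℤ} :
    σ ∈ staysAbove a ↔ a ≤ 0 ∧ shift σ ∈ staysAbove (a - walkStep (σ 0)) := by
  simp only [staysAbove, mem_ofPred_eq, sub_le_iff_le_add', ← walk_succ']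
  exact Nat.and_forall_add_one.symm

lemma staysAbove_eq_empty {a : ℤ} (ha : 0 < a) : staysAbove a = ∅ :=
  eq_empty_of_forall_notMem fun _ h => (mem_staysAbove_iff.1 h).1.not_gt ha

lemma staysAbove_eq_union {a : ℤ} (ha : a ≤ 0) :
    staysAbove a = {σ | σ 0 ∈ ({false} : Set Bool)} ∩ shift ⁻¹' staysAbove (a - 1) ∪
      {σ | σ 0 ∈ ({true} : Set Bool)} ∩ shift ⁻¹' staysAbove (a + 1) := by
  ext σ
  rw [mem_staysAbove_iff]
  cases h : σ 0 <;> simp [h, ha, walkStep]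

end Walk

lemma eq_zero_of_two_mul_eq_add_of_abs_le {v : ℕ → ℝ} {C : ℝ} (h0 : v 0 = 0)
    (hmid : ∀ n, 2 * v (n + 1) = v n + v (n + 2)) (hC : ∀ n, |v n| ≤ C) (n : ℕ) : v n = 0 := by
  have hlin : ∀ n : ℕ, v n = n * v 1 ∧ v (n + 1) = (n + 1) * v 1 := by
    intro n
    induction n with
    | zero => simp [h0]
    | succ n ih =>
      refine ⟨by rw [ih.2]; push_cast; ring, ?_⟩
      have := hmid n
      push_cast
      linarith [ih.1, ih.2]
  have hv1 : v 1 = 0 := by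
    by_contra hne
    obtain ⟨m, hm⟩ := exists_nat_gt (C / |v 1|)
    have hlt : C < m * |v 1| := (div_lt_iff₀ (abs_pos.2 hne)).1 hm
    have := hC m
    rw [(hlin m).1, abs_mul, Nat.abs_cast] at this
    linarith
  rw [(hlin n).1, hv1, mul_zero]

section Recurrence

variable {μ : Measure Bool} [IsProbabilityMeasure μ] (hμ : ∀ b, μ {b} = 1 / 2)
include hμ

lemma infinitePi_real_staysAbove {a : ℤ} (ha : a ≤ 0) :
    (Measure.infinitePi fun _ => μ).real (staysAbove a) =
      2⁻¹ * (Measure.infinitePi fun _ => μ).real (staysAbove (a - 1)) +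
        2⁻¹ * (Measure.infinitePi fun _ => μ).real (staysAbove (a + 1)) := by
  have hdisj : Disjoint
      ({σ : ℕ → Bool | σ 0 ∈ ({false} : Set Bool)} ∩ shift ⁻¹' staysAbove (a - 1))
      ({σ | σ 0 ∈ ({true} : Set Bool)} ∩ shift ⁻¹' staysAbove (a + 1)) :=
    disjoint_left.2 fun σ h h' => by simp_all
  rw [staysAbove_eq_union ha, measureReal_union hdisj
      ((measurable_pi_apply 0 (.singleton _)).inter
        (measurable_shift (measurableSet_staysAbove _))),
    measureReal_def, measureReal_def,
    infinitePi_inter_shift_preimage μ (.singleton _) (measurableSet_staysAbove _),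
    infinitePi_inter_shift_preimage μ (.singleton _) (measurableSet_staysAbove _), hμ, hμ]
  simp [measureReal_def]

theorem infinitePi_staysAbove {a : ℤ} : Measure.infinitePi (fun _ => μ) (staysAbove a) = 0 := by
  have hv : ∀ n : ℕ, (Measure.infinitePi fun _ => μ).real (staysAbove (1 - n)) = 0 := by
    refine eq_zero_of_two_mul_eq_add_of_abs_le (C := 1) ?_ (fun n => ?_) fun n => ?_
    · simp [staysAbove_eq_empty]
    · have h := infinitePi_real_staysAbove hμ (a := -n) (by omega)
      push_cast
      rw [show (1 : ℤ) - (n + 1) = -n by ring, show (1 : ℤ) - (n + 2) = -n - 1 by ring,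
        show (1 : ℤ) - n = -n + 1 by ring, h]
      ring
    · rw [abs_of_nonneg measureReal_nonneg]
      exact measureReal_le_one
  rcases lt_or_ge 0 a with ha | ha
  · simp [staysAbove_eq_empty ha]
  · have := hv (1 - a).toNat
    rwa [show 1 - ((1 - a).toNat : ℤ) = a by omega, measureReal_eq_zero_iff] at this

end Recurrence

-- Truncated subtraction in `ℕ` is the reflection at `0`, just as `ω_1` saturates at `1`.
def reflectedWalk (σ : ℕ → Bool) : ℕ → ℕ
  | 0 => 0
  | n + 1 => if σ n then reflectedWalk σ n - 1 else reflectedWalk σ n + 1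

lemma fcomp_wmap_zero (σ : ℕ → Bool) (n : ℕ) :
    ((fcomp wmap σ n 0 : Icc (0 : ℝ) 1) : ℝ) = 0 := by
  induction n with
  | zero => rfl
  | succ n ih =>
    rw [fcomp, Function.comp_apply]
    cases σ n <;> simp [wmap, w0, w1, ih]

lemma fcomp_wmap_one (σ : ℕ → Bool) (n : ℕ) :
    ((fcomp wmap σ n 1 : Icc (0 : ℝ) 1) : ℝ) = (1 / 2) ^ reflectedWalk σ n := by
  induction n with
  | zero => rfl
  | succ n ih =>
    rw [fcomp, Function.comp_apply, reflectedWalk]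
    cases σ n
    · simp [wmap, w0, ih, pow_succ, div_eq_mul_inv]
    · simp only [wmap, w1, ih, if_true]
      rcases reflectedWalk σ n with _ | k
      · norm_num
      · rw [Nat.add_sub_cancel, pow_succ', ← mul_assoc, mul_one_div_cancel two_ne_zero, one_mul,
          min_eq_left (pow_le_one₀ (by norm_num) (by norm_num))]

lemma pow_reflectedWalk_le_diam (σ : ℕ → Bool) (n : ℕ) :
    (1 / 2 : ℝ) ^ reflectedWalk σ n ≤ diam (range (fcomp wmap σ n)) := by
  have := dist_le_diam_of_mem (isCompact_univ.isBounded.subset (subset_univ _))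
    (mem_range_self (f := fcomp wmap σ n) 1) (mem_range_self 0)
  rwa [Subtype.dist_eq, Real.dist_eq, fcomp_wmap_one, fcomp_wmap_zero, sub_zero,
    abs_of_nonneg (by positivity)] at this

section Dynamics

variable {σ : ℕ → Bool}

lemma eventually_reflectedWalk_pos (hσ : σ ∈ Gset) : ∀ᶠ n in atTop, 0 < reflectedWalk σ n := by
  filter_upwards [hσ.eventually (gt_mem_nhds one_pos)] with n hn
  by_contra h0
  have := pow_reflectedWalk_le_diam σ n
  rw [Nat.eq_zero_of_not_pos h0, pow_zero] at this
  linarith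

lemma walk_sub_reflectedWalk_eq {N : ℕ} (hN : ∀ n ≥ N, 0 < reflectedWalk σ n) {n : ℕ}
    (hn : N ≤ n) : walk σ n - reflectedWalk σ n = walk σ N - reflectedWalk σ N := by
  induction n, hn using Nat.le_induction with
  | base => rfl
  | succ n hn ih =>
    have hpos := hN n hn
    rw [← ih, walk_succ, reflectedWalk]
    cases σ n <;> simp [walkStep]; omega

lemma exists_mem_staysAbove (h : ∀ᶠ n in atTop, 0 < reflectedWalk σ n) :
    ∃ a, σ ∈ staysAbove a := by
  obtain ⟨N, hN⟩ := eventually_atTop.1 h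
  refine ⟨min (-N) (walk σ N - reflectedWalk σ N), fun n => ?_⟩
  rcases le_total N n with hn | hn
  · have := walk_sub_reflectedWalk_eq hN hn
    omega
  · have := neg_le_walk σ n
    omega

lemma Gset_subset_iUnion_staysAbove : Gset ⊆ ⋃ a, staysAbove a := fun _ hσ =>
  mem_iUnion.2 (exists_mem_staysAbove (eventually_reflectedWalk_pos hσ))

end Dynamics

theorem stmt15 (p : Measure Bool) [IsProbabilityMeasure p]
    (hp : ∀ b : Bool, p {b} = 1 / 2)
    (P : Measure (ℕ → Bool)) (hP : IsBernoulli p P) :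
    P Gset = 0 := by
  rw [hP.eq_infinitePi]
  exact measure_mono_null Gset_subset_iUnion_staysAbove
    (measure_iUnion_null fun _ => infinitePi_staysAbove hp)
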